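/- Let φ : [0,∞) → ℝ be continuous with φ(x) > 0 for all x ≥ 0. Then there exists an admissible sequence (t_k)_{k∈ℕ} with t_k → ∞ such that the step function f : [0,∞) → ℝ defined by f(x) = t_{k+1} − t_k for x ∈ [t_k, t_{k+1}), k = 0, 1, 2, …, satisfies f(x) < φ(x) for every x ≥ 0. -/

import Mathlib

/-!
Walk along `[0, ∞)` greedily: from the point `a` with current step `d`, keep the step if
`d < φ` on the look-ahead window `[a + d, a + 3d]`, and halve it otherwise. The invariant
"`d < φ` on `[a, a + 2d]`" survives a halving because `[a + d, a + 2d] ⊆ [a, a + 2d]`, and it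
gives `f < φ` on each `[a, a + d)`. If the points stayed below `B`, the steps would tend to `0`;
but `φ` has a positive minimum on `[0, B + 1]`, which contains every look-ahead window once the
steps are small, so from some moment on no step is halved and the steps cannot tend to `0`.
-/

/-- A sequence `(t k)` of reals is admissible if `t 0 = 0`, it is strictly increasing,
and each successive difference either repeats the previous one or halves it. -/
def Admissible (t : ℕ → ℝ) : Prop :=
  t 0 = 0 ∧ (∀ k, t k < t (k + 1)) ∧
    ∀ k, t (k + 2) - t (k + 1) = t (k + 1) - t k ∨
      t (k + 2) - t (k + 1) = (1 / 2) * (t (k + 1) - t k)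

open Set Filter Topology

open Classical in
noncomputable def stepFun {β : Type*} [Preorder β] [AddGroup β] (t : ℕ → β) (x : β) : β :=
  if h : ∃ k, x ∈ Ico (t k) (t (k + 1)) then t (h.choose + 1) - t h.choose else 0

theorem stepFun_eq_of_mem_Ico {β : Type*} [Preorder β] [AddGroup β] {t : ℕ → β}
    (ht : Monotone t) {k : ℕ} {x : β} (hx : x ∈ Ico (t k) (t (k + 1))) :
    stepFun t x = t (k + 1) - t k := by
  have h : ∃ k, x ∈ Ico (t k) (t (k + 1)) := ⟨k, hx⟩
  have hk : h.choose = k := by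
    by_contra hne
    exact Set.disjoint_left.mp (ht.pairwise_disjoint_on_Ico_succ hne) h.choose_spec hx
  rw [stepFun, dif_pos h, hk]

theorem exists_mem_Ico_of_tendsto_atTop {β : Type*} [LinearOrder β] [NoMaxOrder β]
    {t : ℕ → β} (ht : Monotone t) (htop : Tendsto t atTop atTop) {x : β} (hx : t 0 ≤ x) :
    ∃ k, x ∈ Ico (t k) (t (k + 1)) := by
  have hcover := iUnion_Ico_map_succ_eq_Ici (fun k => ht (Nat.zero_le k))
    (not_bddAbove_of_tendsto_atTop htop)
  have hx' : x ∈ ⋃ k, Ico (t k) (t (Order.succ k)) := hcover ▸ hx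
  simpa [Order.succ_eq_add_one] using hx'

def IsSafeStep (φ : ℝ → ℝ) (a d : ℝ) : Prop :=
  ∀ x ∈ Icc a (a + 2 * d), d < φ x

theorem IsSafeStep.half {φ : ℝ → ℝ} {a d : ℝ} (hd : 0 ≤ d) (h : IsSafeStep φ a d) :
    IsSafeStep φ (a + d) (d / 2) := fun x hx =>
  (half_le_self hd).trans_lt (h x ⟨by linarith [hx.1], by linarith [hx.2]⟩)

theorem exists_pos_forall_isSafeStep {φ : ℝ → ℝ} (hφc : ContinuousOn φ (Ici 0))
    (hφpos : ∀ x, 0 ≤ x → 0 < φ x) (B : ℝ) :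
    ∃ δ > 0, ∀ a d, 0 ≤ a → a ≤ B → d < δ → IsSafeStep φ a d := by
  obtain ⟨m, hm, hmφ⟩ := (isCompact_Icc (a := (0 : ℝ)) (b := B + 1)).exists_forall_le'
    (hφc.mono Icc_subset_Ici_self) (fun x hx => hφpos x hx.1)
  refine ⟨min m (1 / 2), lt_min hm one_half_pos, fun a d ha haB hd x hx => ?_⟩
  have hdm : d < m := hd.trans_le (min_le_left _ _)
  have hd2 : d < 1 / 2 := hd.trans_le (min_le_right _ _)
  exact hdm.trans_le (hmφ x ⟨ha.trans hx.1, by linarith [hx.2]⟩)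

open Classical in
/-- The pairs `(t k, t (k + 1) - t k)` of the greedy walk started at `0` with step `d₀`. -/
noncomputable def greedyWalk (φ : ℝ → ℝ) (d₀ : ℝ) : ℕ → ℝ × ℝ
  | 0 => (0, d₀)
  | k + 1 =>
    let p := greedyWalk φ d₀ k
    (p.1 + p.2, if IsSafeStep φ (p.1 + p.2) p.2 then p.2 else p.2 / 2)

namespace greedyWalk

variable {φ : ℝ → ℝ} {d₀ : ℝ}

theorem fst_zero : (greedyWalk φ d₀ 0).1 = 0 := rfl

theorem fst_succ (k : ℕ) :
    (greedyWalk φ d₀ (k + 1)).1 = (greedyWalk φ d₀ k).1 + (greedyWalk φ d₀ k).2 := rfl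

theorem snd_succ_of_isSafeStep {k : ℕ}
    (h : IsSafeStep φ (greedyWalk φ d₀ (k + 1)).1 (greedyWalk φ d₀ k).2) :
    (greedyWalk φ d₀ (k + 1)).2 = (greedyWalk φ d₀ k).2 := if_pos h

theorem snd_succ_of_not_isSafeStep {k : ℕ}
    (h : ¬IsSafeStep φ (greedyWalk φ d₀ (k + 1)).1 (greedyWalk φ d₀ k).2) :
    (greedyWalk φ d₀ (k + 1)).2 = (greedyWalk φ d₀ k).2 / 2 := if_neg h

theorem snd_succ_eq_or_eq_half (k : ℕ) :
    (greedyWalk φ d₀ (k + 1)).2 = (greedyWalk φ d₀ k).2 ∨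
      (greedyWalk φ d₀ (k + 1)).2 = (greedyWalk φ d₀ k).2 / 2 := by
  by_cases h : IsSafeStep φ (greedyWalk φ d₀ (k + 1)).1 (greedyWalk φ d₀ k).2
  · exact Or.inl (snd_succ_of_isSafeStep h)
  · exact Or.inr (snd_succ_of_not_isSafeStep h)

theorem snd_pos (hd₀ : 0 < d₀) (k : ℕ) : 0 < (greedyWalk φ d₀ k).2 := by
  induction k with
  | zero => exact hd₀
  | succ k ih => rcases snd_succ_eq_or_eq_half (φ := φ) k with h | h <;> rw [h] <;> positivity

theorem fst_strictMono (hd₀ : 0 < d₀) : StrictMono fun k => (greedyWalk φ d₀ k).1 :=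
  strictMono_nat_of_lt_succ fun k => by
    rw [fst_succ]; exact lt_add_of_pos_right _ (snd_pos hd₀ k)

theorem fst_nonneg (hd₀ : 0 < d₀) (k : ℕ) : 0 ≤ (greedyWalk φ d₀ k).1 :=
  fst_zero (φ := φ) (d₀ := d₀) ▸ (fst_strictMono hd₀).monotone (Nat.zero_le k)

theorem isSafeStep (hd₀ : 0 < d₀) (h₀ : IsSafeStep φ 0 d₀) (k : ℕ) :
    IsSafeStep φ (greedyWalk φ d₀ k).1 (greedyWalk φ d₀ k).2 := by
  induction k with
  | zero => exact h₀
  | succ k ih =>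
    by_cases h : IsSafeStep φ (greedyWalk φ d₀ (k + 1)).1 (greedyWalk φ d₀ k).2
    · rwa [snd_succ_of_isSafeStep h]
    · rw [snd_succ_of_not_isSafeStep h, fst_succ]
      exact ih.half (snd_pos hd₀ k).le

theorem sub_lt_of_mem_Ico (hd₀ : 0 < d₀) (h₀ : IsSafeStep φ 0 d₀) {k : ℕ} {x : ℝ}
    (hx : x ∈ Ico (greedyWalk φ d₀ k).1 (greedyWalk φ d₀ (k + 1)).1) :
    (greedyWalk φ d₀ (k + 1)).1 - (greedyWalk φ d₀ k).1 < φ x := by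
  rw [fst_succ] at hx
  rw [fst_succ, add_sub_cancel_left]
  exact isSafeStep hd₀ h₀ k x ⟨hx.1, by linarith [hx.2, snd_pos (φ := φ) hd₀ k]⟩

theorem tendsto_fst_atTop (hφc : ContinuousOn φ (Ici 0)) (hφpos : ∀ x, 0 ≤ x → 0 < φ x)
    (hd₀ : 0 < d₀) : Tendsto (fun k => (greedyWalk φ d₀ k).1) atTop atTop := by
  set t := fun k => (greedyWalk φ d₀ k).1
  set d := fun k => (greedyWalk φ d₀ k).2
  have ht : Monotone t := (fst_strictMono hd₀).monotone
  refine tendsto_atTop_atTop_of_monotone' ht fun ⟨B, hB⟩ => ?_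
  have hB : ∀ k, t k ≤ B := fun k => hB ⟨k, rfl⟩
  have hd_zero : Tendsto d atTop (𝓝 0) := by
    have hlim := tendsto_atTop_ciSup ht ⟨B, forall_mem_range.mpr hB⟩
    simpa [t, d, fst_succ] using (hlim.comp (tendsto_add_atTop_nat 1)).sub hlim
  obtain ⟨δ, hδ, hsafe⟩ := exists_pos_forall_isSafeStep hφc hφpos B
  obtain ⟨K, hK⟩ := eventually_atTop.mp (hd_zero.eventually (gt_mem_nhds hδ))
  -- once the steps are below `δ` the look-ahead always succeeds, so the step freezes
  have hfreeze : ∀ k ≥ K, d k = d K := by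
    refine Nat.le_induction rfl fun k hk ih => ?_
    have hsafe_k := hsafe _ _ (fst_nonneg hd₀ (k + 1)) (hB (k + 1)) (hK k hk)
    exact (snd_succ_of_isSafeStep hsafe_k).trans ih
  have hd_const : Tendsto d atTop (𝓝 (d K)) :=
    tendsto_const_nhds.congr' (eventually_atTop.mpr ⟨K, fun k hk => (hfreeze k hk).symm⟩)
  exact (snd_pos hd₀ K).ne' (tendsto_nhds_unique hd_const hd_zero)

theorem admissible_fst (hd₀ : 0 < d₀) : Admissible fun k => (greedyWalk φ d₀ k).1 := by
  refine ⟨fst_zero, fun k => fst_strictMono hd₀ k.lt_add_one, fun k => ?_⟩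
  simp only [fst_succ, add_sub_cancel_left]
  rcases snd_succ_eq_or_eq_half (φ := φ) (d₀ := d₀) k with h | h
  · exact Or.inl h
  · exact Or.inr (by rw [h]; ring)

end greedyWalk

/-- For a continuous function `φ` on `[0,∞)` with `φ > 0` there is an
admissible sequence `(t k)` tending to `∞` such that the step function `f` with value
`t (k+1) − t k` on `[t k, t (k+1))` satisfies `f x < φ x` for all `x ≥ 0`. -/
theorem stmt3 (φ : ℝ → ℝ) (hφc : ContinuousOn φ (Set.Ici 0))
    (hφpos : ∀ x, 0 ≤ x → 0 < φ x) :
    ∃ (t : ℕ → ℝ) (f : ℝ → ℝ), Admissible t ∧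
      Filter.Tendsto t Filter.atTop Filter.atTop ∧
      (∀ k, ∀ x ∈ Set.Ico (t k) (t (k + 1)), f x = t (k + 1) - t k) ∧
      ∀ x, 0 ≤ x → f x < φ x := by
  obtain ⟨δ, hδ, hsafe⟩ := exists_pos_forall_isSafeStep hφc hφpos 0
  have hd₀ : 0 < δ / 2 := half_pos hδ
  set t := fun k => (greedyWalk φ (δ / 2) k).1
  have ht : Monotone t := (greedyWalk.fst_strictMono hd₀).monotone
  have htop := greedyWalk.tendsto_fst_atTop hφc hφpos hd₀
  have hf : ∀ k, ∀ x ∈ Ico (t k) (t (k + 1)), stepFun t x = t (k + 1) - t k :=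
    fun k x hx => stepFun_eq_of_mem_Ico ht hx
  refine ⟨t, stepFun t, greedyWalk.admissible_fst hd₀, htop, hf, fun x hx => ?_⟩
  obtain ⟨k, hk⟩ := exists_mem_Ico_of_tendsto_atTop ht htop hx
  rw [hf k x hk]
  exact greedyWalk.sub_lt_of_mem_Ico hd₀ (hsafe 0 _ le_rfl le_rfl (half_lt_self hδ)) hk
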